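/- arXiv:1401.0612 — 2 statements merged into one kernel-verified Lean document; each statement's English description precedes it below -/
import Mathlib

section
/- Let U ⊆ ℝ² be open and let z : ℝ² → ℝ be twice continuously differentiable on U. Fix (x,y) ∈ U and p ∈ ℝ with D(x,y,p) := z_y(x,y) + z_x(x,y)·p − p² ≠ 0, and suppose D(·,·,q) ≠ 0 for all (x',y',q) in a neighborhood of (x,y,p). Define F(x,y,p) = 1/D(x,y,p) and G(x,y,p) = (p − z_x(x,y))/D(x,y,p) on that neighborhood. Then, at the point (x,y,p), one has the identity (∂F/∂y + G·∂F/∂p − ∂G/∂x − F·∂G/∂p) · D² = −(z_yy + z_x·z_xy − z_y·z_xx + 1), where all partial derivatives of F and G are taken as functions of the three independent variables (x,y,p) and the derivatives of z are evaluated at (x,y). -/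
/-!
Write `G = N / D` with `N = p - z_x`. For arbitrary `D` and `N` the quotient rule turns the
compatibility expression of `φ_x = 1 / D`, `φ_y = N / D` into
`E · D² = N D_x - D N_x - D_y - N_p`. Here `D_x = z_xy + z_xx p`, `D_y = z_yy + z_yx p`,
`N_x = -z_xx` and `N_p = 1`; since `z_xy = z_yx` for `z` of class `C²`, the terms in `p` cancel and what remains is `-(z_yy + z_x z_xy - z_y z_xx + 1)`.
-/

/-- Partial derivative in `x` of a function on `ℝ × ℝ`. -/
noncomputable def pdx (f : ℝ × ℝ → ℝ) (q : ℝ × ℝ) : ℝ := fderiv ℝ f q (1, 0)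

/-- Partial derivative in `y` of a function on `ℝ × ℝ`. -/
noncomputable def pdy (f : ℝ × ℝ → ℝ) (q : ℝ × ℝ) : ℝ := fderiv ℝ f q (0, 1)

/-- Partial derivative in the first variable `x` of a function on `ℝ × ℝ × ℝ = {(x,y,p)}`. -/
noncomputable def pd1 (f : ℝ × ℝ × ℝ → ℝ) (q : ℝ × ℝ × ℝ) : ℝ := fderiv ℝ f q (1, 0, 0)

/-- Partial derivative in the second variable `y`. -/
noncomputable def pd2 (f : ℝ × ℝ × ℝ → ℝ) (q : ℝ × ℝ × ℝ) : ℝ := fderiv ℝ f q (0, 1, 0)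

/-- Partial derivative in the third variable `p`. -/
noncomputable def pd3 (f : ℝ × ℝ × ℝ → ℝ) (q : ℝ × ℝ × ℝ) : ℝ := fderiv ℝ f q (0, 0, 1)

/-- `D(x,y,p) = z_y(x,y) + z_x(x,y)·p − p²`. -/
noncomputable def Dfun (z : ℝ × ℝ → ℝ) (q : ℝ × ℝ × ℝ) : ℝ :=
  pdy z (q.1, q.2.1) + pdx z (q.1, q.2.1) * q.2.2 - q.2.2 ^ 2

/-- `F(x,y,p) = 1/D(x,y,p)`. -/
noncomputable def Ffun (z : ℝ × ℝ → ℝ) (q : ℝ × ℝ × ℝ) : ℝ := 1 / Dfun z q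

/-- `G(x,y,p) = (p − z_x(x,y))/D(x,y,p)`. -/
noncomputable def Gfun (z : ℝ × ℝ → ℝ) (q : ℝ × ℝ × ℝ) : ℝ :=
  (q.2.2 - pdx z (q.1, q.2.1)) / Dfun z q

/-- The Gibbons–Tsarev expression `z_yy + z_x·z_xy − z_y·z_xx + 1`. -/
noncomputable def GT (z : ℝ × ℝ → ℝ) (q : ℝ × ℝ) : ℝ :=
  pdy (pdy z) q + pdx z q * pdx (pdy z) q - pdy z q * pdx (pdx z) q + 1

/-- The compatibility (zero-curvature) expression
`E = ∂F/∂y + G·∂F/∂p − ∂G/∂x − F·∂G/∂p` of system (1). -/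
noncomputable def Efun (z : ℝ × ℝ → ℝ) (q : ℝ × ℝ × ℝ) : ℝ :=
  pd2 (Ffun z) q + Gfun z q * pd3 (Ffun z) q - pd1 (Gfun z) q - Ffun z q * pd3 (Gfun z) q

open ContinuousLinearMap

section Calculus

variable {E F G H : Type*} [NormedAddCommGroup E] [NormedSpace ℝ E] [NormedAddCommGroup F]
  [NormedSpace ℝ F] [NormedAddCommGroup G] [NormedSpace ℝ G] [NormedAddCommGroup H]
  [NormedSpace ℝ H]

theorem hasFDerivAt_comp_fst_fst {f : E × F → H} {f' : E × F →L[ℝ] H} {x : E} {y : F} (p : G)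
    (hf : HasFDerivAt f f' (x, y)) :
    HasFDerivAt (fun q : E × F × G => f (q.1, q.2.1))
      (f'.comp ((fst ℝ E (F × G)).prod ((fst ℝ F G).comp (snd ℝ E (F × G))))) (x, y, p) :=
  hf.comp (x, y, p) (hasFDerivAt_fst.prodMk hasFDerivAt_snd.fst)

theorem hasFDerivAt_fderiv_apply {f : E → F} {x : E} (hf : DifferentiableAt ℝ (fderiv ℝ f) x)
    (v : E) :
    HasFDerivAt (fun y => fderiv ℝ f y v) ((apply ℝ F v).comp (fderiv ℝ (fderiv ℝ f) x)) x :=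
  (apply ℝ F v).hasFDerivAt.comp x hf.hasFDerivAt

theorem hasFDerivAt_one_div {D : E → ℝ} {D' : E →L[ℝ] ℝ} {q : E} (hD : HasFDerivAt D D' q)
    (hq : D q ≠ 0) : HasFDerivAt (fun q => 1 / D q) (-(D q ^ 2)⁻¹ • D') q := by
  simpa only [one_div, Function.comp_def] using (hasDerivAt_inv hq).comp_hasFDerivAt q hD

/-- The compatibility expression of `φ_x = 1 / D`, `φ_y = N / D`, where `u`, `v`, `w` are the
directions of `x`, `y` and `φ`. -/
theorem compatibility_mul_sq (D N : E → ℝ) (q u v w : E) (hD : DifferentiableAt ℝ D q)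
    (hN : DifferentiableAt ℝ N q) (hq : D q ≠ 0) :
    (fderiv ℝ (fun q => 1 / D q) q v + N q / D q * fderiv ℝ (fun q => 1 / D q) q w
        - fderiv ℝ (fun q => N q / D q) q u - 1 / D q * fderiv ℝ (fun q => N q / D q) q w)
        * D q ^ 2
      = N q * fderiv ℝ D q u - D q * fderiv ℝ N q u - fderiv ℝ D q v - fderiv ℝ N q w := by
  have hF := hasFDerivAt_one_div hD.hasFDerivAt hq
  have hG : HasFDerivAt (fun q => N q / D q)
      (N q • (-(D q ^ 2)⁻¹ • fderiv ℝ D q) + (1 / D q) • fderiv ℝ N q) q := by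
    simpa only [div_eq_mul_one_div (N _), Pi.mul_def] using hN.hasFDerivAt.mul hF
  simp only [hF.fderiv, hG.fderiv, add_apply, smul_apply, smul_eq_mul]
  field_simp
  ring

theorem ContDiffAt.differentiableAt_fderiv {f : E → F} {x : E} {n : WithTop ℕ∞}
    (hf : ContDiffAt ℝ n f x) (hn : 2 ≤ n) : DifferentiableAt ℝ (fderiv ℝ f) x :=
  (hf.fderiv_right (m := 1) hn).differentiableAt one_ne_zero

end Calculus

section GibbonsTsarev

noncomputable def Nfun (z : ℝ × ℝ → ℝ) (q : ℝ × ℝ × ℝ) : ℝ := q.2.2 - pdx z (q.1, q.2.1)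

theorem pdx_pdy_eq_pdy_pdx {z : ℝ × ℝ → ℝ} {q : ℝ × ℝ} (hz : ContDiffAt ℝ 2 z q) :
    pdx (pdy z) q = pdy (pdx z) q := by
  have hf := hz.differentiableAt_fderiv le_rfl
  calc pdx (pdy z) q = fderiv ℝ (fderiv ℝ z) q (1, 0) (0, 1) :=
        congrArg (· (1, 0)) (hasFDerivAt_fderiv_apply hf (0, 1)).fderiv
    _ = fderiv ℝ (fderiv ℝ z) q (0, 1) (1, 0) := hz.isSymmSndFDerivAt (by simp) _ _
    _ = pdy (pdx z) q := (congrArg (· (0, 1)) (hasFDerivAt_fderiv_apply hf (1, 0)).fderiv).symm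

variable {z : ℝ × ℝ → ℝ} {x y p : ℝ}

theorem fderiv_Dfun_apply (hzx : DifferentiableAt ℝ (pdx z) (x, y))
    (hzy : DifferentiableAt ℝ (pdy z) (x, y)) (u : ℝ × ℝ × ℝ) :
    fderiv ℝ (Dfun z) (x, y, p) u = fderiv ℝ (pdy z) (x, y) (u.1, u.2.1)
      + fderiv ℝ (pdx z) (x, y) (u.1, u.2.1) * p + (pdx z (x, y) - 2 * p) * u.2.2 := by
  have hp := (hasFDerivAt_snd (𝕜 := ℝ) (p := ((x, y, p) : ℝ × ℝ × ℝ))).snd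
  have hD : HasFDerivAt (Dfun z) _ (x, y, p) := ((hasFDerivAt_comp_fst_fst p hzy.hasFDerivAt).add
    ((hasFDerivAt_comp_fst_fst p hzx.hasFDerivAt).mul hp)).sub (hp.pow 2)
  rw [hD.fderiv]
  simp only [Nat.add_one_sub_one, pow_one, nsmul_eq_mul, Nat.cast_ofNat, sub_apply, add_apply,
    comp_apply, prod_apply, coe_fst', coe_snd', smul_apply, smul_eq_mul]
  ring

theorem fderiv_Nfun_apply (hzx : DifferentiableAt ℝ (pdx z) (x, y)) (u : ℝ × ℝ × ℝ) :
    fderiv ℝ (Nfun z) (x, y, p) u = u.2.2 - fderiv ℝ (pdx z) (x, y) (u.1, u.2.1) := by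
  have hp := (hasFDerivAt_snd (𝕜 := ℝ) (p := ((x, y, p) : ℝ × ℝ × ℝ))).snd
  have hN : HasFDerivAt (Nfun z) _ (x, y, p) :=
    hp.sub (hasFDerivAt_comp_fst_fst p hzx.hasFDerivAt)
  rw [hN.fderiv]
  simp

end GibbonsTsarev

theorem statement0_general (U : Set (ℝ × ℝ)) (hU : IsOpen U) (z : ℝ × ℝ → ℝ)
    (hz : ContDiffOn ℝ 2 z U) (x y p : ℝ) (hmem : (x, y) ∈ U)
    (hD : Dfun z (x, y, p) ≠ 0) :
    Efun z (x, y, p) * (Dfun z (x, y, p)) ^ 2 = -GT z (x, y) := by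
  have hz2 : ContDiffAt ℝ 2 z (x, y) := hz.contDiffAt (hU.mem_nhds hmem)
  have hf := hz2.differentiableAt_fderiv le_rfl
  have hzx : DifferentiableAt ℝ (pdx z) (x, y) := (hasFDerivAt_fderiv_apply hf _).differentiableAt
  have hzy : DifferentiableAt ℝ (pdy z) (x, y) := (hasFDerivAt_fderiv_apply hf _).differentiableAt
  have hDd : DifferentiableAt ℝ (Dfun z) (x, y, p) := by unfold Dfun; fun_prop
  have hNd : DifferentiableAt ℝ (Nfun z) (x, y, p) := by unfold Nfun; fun_prop
  have hE : Efun z (x, y, p) * Dfun z (x, y, p) ^ 2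
      = Nfun z (x, y, p) * pd1 (Dfun z) (x, y, p) - Dfun z (x, y, p) * pd1 (Nfun z) (x, y, p)
        - pd2 (Dfun z) (x, y, p) - pd3 (Nfun z) (x, y, p) :=
    compatibility_mul_sq (Dfun z) (Nfun z) (x, y, p) (1, 0, 0) (0, 1, 0) (0, 0, 1) hDd hNd hD
  have hDx : pd1 (Dfun z) (x, y, p) = pdx (pdy z) (x, y) + pdx (pdx z) (x, y) * p := by
    simp [pd1, pdx, fderiv_Dfun_apply hzx hzy]
  have hDy : pd2 (Dfun z) (x, y, p) = pdy (pdy z) (x, y) + pdy (pdx z) (x, y) * p := by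
    simp [pd2, pdy, fderiv_Dfun_apply hzx hzy]
  have hNx : pd1 (Nfun z) (x, y, p) = -pdx (pdx z) (x, y) := by
    simp [pd1, pdx, fderiv_Nfun_apply hzx]
  have hNp : pd3 (Nfun z) (x, y, p) = 1 := by
    simp [pd3, fderiv_Nfun_apply hzx, Prod.mk_zero_zero]
  rw [hE, hDx, hDy, hNx, hNp, GT, pdx_pdy_eq_pdy_pdx hz2]
  simp only [Dfun, Nfun]
  ring

/-- At a point where `D ≠ 0` (and `D ≠ 0` in a whole neighborhood),
the compatibility expression of system (1) multiplied by `D²` equals minus the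
Gibbons–Tsarev expression. -/
theorem statement0 (U : Set (ℝ × ℝ)) (hU : IsOpen U) (z : ℝ × ℝ → ℝ)
    (hz : ContDiffOn ℝ 2 z U) (x y p : ℝ) (hmem : (x, y) ∈ U)
    (hD : Dfun z (x, y, p) ≠ 0)
    (hDnbhd : ∀ᶠ q in nhds ((x, y, p) : ℝ × ℝ × ℝ), Dfun z q ≠ 0) :
    Efun z (x, y, p) * (Dfun z (x, y, p)) ^ 2 = -GT z (x, y) :=
  statement0_general U hU z hz x y p hmem hD
end

section
/- Let U ⊆ ℝ² be open and z : ℝ² → ℝ twice continuously differentiable on U, and set D(x,y,p) = z_y(x,y) + z_x(x,y)·p − p². Suppose that for every (x₀,y₀) ∈ U and every p₀ ∈ ℝ with D(x₀,y₀,p₀) ≠ 0 there exist an open neighborhood W ⊆ U of (x₀,y₀) and a twice continuously differentiable function φ : W → ℝ with φ(x₀,y₀) = p₀, D(x,y,φ(x,y)) ≠ 0 on W, and φ_x = 1/D(x,y,φ), φ_y = −(z_x − φ)/D(x,y,φ) on W. Then z satisfies the Gibbons–Tsarev equation z_yy + z_x·z_xy − z_y·z_xx + 1 = 0 at every point of U.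 -/
/-!
Along a solution `φ` of system (1), both mixed partials of `φ` are determined by the system, and
their difference works out to `-GT z / D²`: every `φ`-dependent term cancels. Since `φ` is `C²`,
its mixed partials agree, so `GT z = 0` at every point through which a solution passes. A solution
passes through every point of `U`, because `p ↦ D(x₀, y₀, p)` is a nonzero quadratic and so has
a non-root `p₀`.
-/

open Filter Topology

section DirectionalDerivative

variable {E F : Type*} [NormedAddCommGroup E] [NormedSpace ℝ E]
  [NormedAddCommGroup F] [NormedSpace ℝ F] {f : E → F} {x : E}

theorem ContDiffAt.differentiableAt_fderiv_apply (hf : ContDiffAt ℝ 2 f x) (v : E) :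
    DifferentiableAt ℝ (fun y => fderiv ℝ f y v) x :=
  ((hf.fderiv_right le_rfl).differentiableAt one_ne_zero).clm_apply (differentiableAt_const v)

theorem ContDiffAt.fderiv_fderiv_apply_comm (hf : ContDiffAt ℝ 2 f x) (v w : E) :
    fderiv ℝ (fun y => fderiv ℝ f y v) x w = fderiv ℝ (fun y => fderiv ℝ f y w) x v := by
  have hdf : DifferentiableAt ℝ (fderiv ℝ f) x :=
    (hf.fderiv_right le_rfl).differentiableAt one_ne_zero
  rw [fderiv_clm_apply hdf (differentiableAt_const v),
    fderiv_clm_apply hdf (differentiableAt_const w)]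
  simpa using (hf.isSymmSndFDerivAt (by simp) w v)

theorem fderiv_div_apply {N D : E → ℝ} (hN : DifferentiableAt ℝ N x)
    (hD : DifferentiableAt ℝ D x) (hD0 : D x ≠ 0) (v : E) :
    fderiv ℝ (fun y => N y / D y) x v =
      (fderiv ℝ N x v * D x - N x * fderiv ℝ D x v) / D x ^ 2 := by
  have h : HasFDerivAt (fun y => N y * (D y)⁻¹) _ x :=
    hN.hasFDerivAt.mul ((hasDerivAt_inv hD0).comp_hasFDerivAt x hD.hasFDerivAt)
  simp only [div_eq_mul_inv, h.fderiv]
  simp only [neg_smul, smul_neg, add_apply, neg_apply, smul_apply, smul_eq_mul]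
  field_simp
  ring

theorem fderiv_add_mul_sub_sq_apply {a b φ : E → ℝ} (ha : DifferentiableAt ℝ a x)
    (hb : DifferentiableAt ℝ b x) (hφ : DifferentiableAt ℝ φ x) (v : E) :
    fderiv ℝ (fun y => b y + a y * φ y - φ y ^ 2) x v =
      fderiv ℝ b x v + fderiv ℝ a x v * φ x + a x * fderiv ℝ φ x v -
        2 * φ x * fderiv ℝ φ x v := by
  have h : HasFDerivAt (fun y => b y + a y * φ y - φ y ^ 2) _ x :=
    (hb.hasFDerivAt.add (ha.hasFDerivAt.mul hφ.hasFDerivAt)).sub (hφ.hasFDerivAt.pow 2)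
  rw [h.fderiv]
  simp only [sub_apply, add_apply, smul_apply, smul_eq_mul, nsmul_eq_mul]
  ring

end DirectionalDerivative

theorem exists_add_mul_sub_sq_ne_zero (a b : ℝ) : ∃ p : ℝ, b + a * p - p ^ 2 ≠ 0 := by
  by_contra! h
  linarith [h 0, h 1, h 2]

theorem pdy_pdx_eq_pdx_pdy {f : ℝ × ℝ → ℝ} {q : ℝ × ℝ} (hf : ContDiffAt ℝ 2 f q) :
    pdy (pdx f) q = pdx (pdy f) q :=
  hf.fderiv_fderiv_apply_comm (1, 0) (0, 1)

theorem pdy_pdx_sub_pdx_pdy_of_system {z φ : ℝ × ℝ → ℝ} {q : ℝ × ℝ}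
    (hz : ContDiffAt ℝ 2 z q) (hφ : DifferentiableAt ℝ φ q)
    (hD : Dfun z (q.1, q.2, φ q) ≠ 0)
    (hx : pdx φ =ᶠ[𝓝 q] fun p => 1 / Dfun z (p.1, p.2, φ p))
    (hy : pdy φ =ᶠ[𝓝 q] fun p => -(pdx z p - φ p) / Dfun z (p.1, p.2, φ p)) :
    pdy (pdx φ) q - pdx (pdy φ) q = -GT z q / Dfun z (q.1, q.2, φ q) ^ 2 := by
  set D : ℝ × ℝ → ℝ := fun p => Dfun z (p.1, p.2, φ p)
  have hDq : D q = pdy z q + pdx z q * φ q - φ q ^ 2 := rfl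
  change D q ≠ 0 at hD
  show _ = -GT z q / D q ^ 2
  have hzx : DifferentiableAt ℝ (pdx z) q := hz.differentiableAt_fderiv_apply (1, 0)
  have hzy : DifferentiableAt ℝ (pdy z) q := hz.differentiableAt_fderiv_apply (0, 1)
  have hDd : DifferentiableAt ℝ D q := (hzy.add (hzx.mul hφ)).sub (hφ.pow 2)
  have hDx : pdx D q = pdx (pdy z) q + pdx (pdx z) q * φ q + pdx z q * pdx φ q -
      2 * φ q * pdx φ q :=
    fderiv_add_mul_sub_sq_apply hzx hzy hφ (1, 0)
  have hDy : pdy D q = pdy (pdy z) q + pdy (pdx z) q * φ q + pdx z q * pdy φ q -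
      2 * φ q * pdy φ q :=
    fderiv_add_mul_sub_sq_apply hzx hzy hφ (0, 1)
  have hφxy : pdy (pdx φ) q = -pdy D q / D q ^ 2 := by
    rw [pdy, hx.fderiv_eq, fderiv_div_apply (differentiableAt_const 1) hDd hD, fderiv_const_apply,
      zero_apply, zero_mul, one_mul, zero_sub]
    rfl
  have hφyx : pdx (pdy φ) q =
      (-(pdx (pdx z) q - pdx φ q) * D q - -(pdx z q - φ q) * pdx D q) / D q ^ 2 := by
    rw [pdx, hy.fderiv_eq,
      fderiv_div_apply (N := fun p => -(pdx z p - φ p)) (hzx.sub hφ).neg hDd hD,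
      fderiv_fun_neg, fderiv_fun_sub hzx hφ]
    rfl
  have hφx : pdx φ q = 1 / D q := hx.eq_of_nhds
  have hφy : pdy φ q = -(pdx z q - φ q) / D q := hy.eq_of_nhds
  rw [hφxy, hφyx, hDx, hDy, hφx, hφy, pdy_pdx_eq_pdx_pdy hz, GT]
  field_simp
  rw [hDq]
  ring

theorem statement8_general (U : Set (ℝ × ℝ)) (z : ℝ × ℝ → ℝ)
    (hz : ContDiffOn ℝ 2 z U)
    (hsol : ∀ x₀ y₀ : ℝ, (x₀, y₀) ∈ U → ∀ p₀ : ℝ, Dfun z (x₀, y₀, p₀) ≠ 0 →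
      ∃ W : Set (ℝ × ℝ), IsOpen W ∧ W ⊆ U ∧ (x₀, y₀) ∈ W ∧
        ∃ φ : ℝ × ℝ → ℝ, ContDiffOn ℝ 2 φ W ∧ φ (x₀, y₀) = p₀ ∧
          (∀ q ∈ W, Dfun z (q.1, q.2, φ q) ≠ 0) ∧
          (∀ q ∈ W, pdx φ q = 1 / Dfun z (q.1, q.2, φ q)) ∧
          (∀ q ∈ W, pdy φ q = -(pdx z q - φ q) / Dfun z (q.1, q.2, φ q))) :
    ∀ q ∈ U, GT z q = 0 := by
  rintro ⟨x₀, y₀⟩ hq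
  obtain ⟨p₀, hp₀⟩ := exists_add_mul_sub_sq_ne_zero (pdx z (x₀, y₀)) (pdy z (x₀, y₀))
  obtain ⟨W, hW, hWU, hqW, φ, hφ, -, hD, hx, hy⟩ := hsol x₀ y₀ hq p₀ hp₀
  have hWq : W ∈ 𝓝 (x₀, y₀) := hW.mem_nhds hqW
  have hφq : ContDiffAt ℝ 2 φ (x₀, y₀) := hφ.contDiffAt hWq
  have hmixed := pdy_pdx_sub_pdx_pdy_of_system ((hz.mono hWU).contDiffAt hWq)
    (hφq.differentiableAt two_ne_zero) (hD _ hqW) (eventually_of_mem hWq hx)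
    (eventually_of_mem hWq hy)
  rw [pdy_pdx_eq_pdx_pdy hφq, sub_self, eq_comm, neg_div, neg_eq_zero,
    div_eq_zero_iff] at hmixed
  exact hmixed.resolve_right (pow_ne_zero 2 (hD _ hqW))

/-- If system (1) is locally solvable through every admissible initial
point `(x₀,y₀,p₀)` (with `D(x₀,y₀,p₀) ≠ 0`), then `z` satisfies the Gibbons–Tsarev
equation everywhere on `U`. -/
theorem statement8 (U : Set (ℝ × ℝ)) (hU : IsOpen U) (z : ℝ × ℝ → ℝ)
    (hz : ContDiffOn ℝ 2 z U)
    (hsol : ∀ x₀ y₀ : ℝ, (x₀, y₀) ∈ U → ∀ p₀ : ℝ, Dfun z (x₀, y₀, p₀) ≠ 0 →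
      ∃ W : Set (ℝ × ℝ), IsOpen W ∧ W ⊆ U ∧ (x₀, y₀) ∈ W ∧
        ∃ φ : ℝ × ℝ → ℝ, ContDiffOn ℝ 2 φ W ∧ φ (x₀, y₀) = p₀ ∧
          (∀ q ∈ W, Dfun z (q.1, q.2, φ q) ≠ 0) ∧
          (∀ q ∈ W, pdx φ q = 1 / Dfun z (q.1, q.2, φ q)) ∧
          (∀ q ∈ W, pdy φ q = -(pdx z q - φ q) / Dfun z (q.1, q.2, φ q))) :
    ∀ q ∈ U, GT z q = 0 :=
  statement8_general U z hz hsol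
end
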